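/- Let A be a C*-algebra and let a, b ∈ A be normal. Then a = b if and only if ρ(a,b) = 0. -/

import Mathlib

/-!
If `ρ(a,b) = 0`, the Taylor coefficients `C_{a,b}^n(1) / n!` of
`F(w) = exp(w a) exp(-w b) = exp(w C_{a,b})(1)` decay faster than any geometric sequence, so `F`
has exponential type zero. For normal `a`, `b` and `|u| = 1`, the entire function
`g(z) = exp(z (u a⋆ - ū a)) exp(-z (u b⋆ - ū b))` differs from `F((z̄ - z) ū)` only by unitary
factors on both sides (Rosenblum's trick), so `‖g z‖ ≤ M_ε exp(ε |Im z|)` for every `ε > 0`, while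
`‖g t‖ = ‖1‖` for real `t`. Phragmén–Lindelöf bounds `g` by `‖1‖`, Liouville makes it constant,
and its derivative at `0` gives `u a⋆ - ū a = u b⋆ - ū b`; the cases `u = 1` and `u = i` give
`a = b`.
-/

/-- The iterated commutator `C_{a,b}^n` applied to `1`, where `C_{a,b}(x) = a*x - x*b`. -/
noncomputable def citer {A : Type*} [Ring A] (a b : A) (n : ℕ) : A :=
  (fun x => a * x - x * b)^[n] 1

/-- `ρ(a,b) = limsup_n ‖C_{a,b}^n(1)‖^{1/n}`. -/
noncomputable def rho {A : Type*} [NormedRing A] (a b : A) : ℝ :=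
  Filter.limsup (fun n : ℕ => ‖citer a b n‖ ^ ((n : ℝ)⁻¹)) Filter.atTop

open NormedSpace Filter Topology ContinuousLinearMap ComplexConjugate

section Ring

variable {A : Type*} [Ring A] (a b : A)

@[simp]
lemma citer_zero : citer a b 0 = 1 := rfl

lemma citer_succ (n : ℕ) : citer a b (n + 1) = a * citer a b n - citer a b n * b := by
  rw [citer, Function.iterate_succ_apply']
  rfl

lemma citer_self_succ (n : ℕ) : citer a a (n + 1) = 0 := by
  induction n with
  | zero => simp [citer_succ]
  | succ n ih => simp [citer_succ a a (n + 1), ih]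

lemma citer_smul {R : Type*} [CommRing R] [Algebra R A] (c : R) (n : ℕ) :
    citer (c • a) (c • b) n = c ^ n • citer a b n := by
  induction n with
  | zero => simp
  | succ n ih =>
    rw [citer_succ, citer_succ, ih, smul_mul_smul_comm, smul_mul_smul_comm, mul_comm c,
      ← smul_sub, ← pow_succ]

end Ring

section Normed

variable {A : Type*} [NormedRing A]

lemma rho_self (a : A) : rho a a = 0 := by
  have h : (fun n : ℕ => ‖citer a a n‖ ^ (n : ℝ)⁻¹) =ᶠ[atTop] fun _ => 0 := by
    filter_upwards [eventually_ge_atTop 1] with n hn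
    obtain ⟨m, rfl⟩ := Nat.exists_eq_add_of_le' hn
    rw [citer_self_succ, norm_zero, Real.zero_rpow (by positivity)]
  rw [rho, limsup_congr h, limsup_const]

lemma norm_citer_succ_le (a b : A) (n : ℕ) : ‖citer a b (n + 1)‖ ≤ (‖a‖ + ‖b‖) ^ (n + 1) := by
  induction n with
  | zero => simpa [citer_succ] using norm_sub_le a b
  | succ n ih =>
    calc ‖citer a b (n + 1 + 1)‖
        ≤ ‖a‖ * ‖citer a b (n + 1)‖ + ‖citer a b (n + 1)‖ * ‖b‖ := by
          rw [citer_succ]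
          exact (norm_sub_le _ _).trans (add_le_add (norm_mul_le _ _) (norm_mul_le _ _))
      _ = (‖a‖ + ‖b‖) * ‖citer a b (n + 1)‖ := by ring
      _ ≤ (‖a‖ + ‖b‖) ^ (n + 1 + 1) := by
          rw [pow_succ' _ (n + 1)]; gcongr

lemma isBoundedUnder_rpow_inv_norm_citer (a b : A) :
    IsBoundedUnder (· ≤ ·) atTop fun n : ℕ => ‖citer a b n‖ ^ (n : ℝ)⁻¹ := by
  refine ⟨‖a‖ + ‖b‖, eventually_map.2 ?_⟩
  filter_upwards [eventually_ge_atTop 1] with n hn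
  obtain ⟨m, rfl⟩ := Nat.exists_eq_add_of_le' hn
  calc ‖citer a b (m + 1)‖ ^ ((m + 1 : ℕ) : ℝ)⁻¹
      ≤ ((‖a‖ + ‖b‖) ^ (m + 1)) ^ ((m + 1 : ℕ) : ℝ)⁻¹ := by
        gcongr; exact norm_citer_succ_le a b m
    _ = ‖a‖ + ‖b‖ := Real.pow_rpow_inv_natCast (by positivity) m.succ_ne_zero

lemma exists_le_mul_pow_of_eventually_le {v : ℕ → ℝ} {ε : ℝ} (hε : 0 < ε)
    (h : ∀ᶠ n in atTop, v n ≤ ε ^ n) : ∃ M, ∀ n, v n ≤ M * ε ^ n := by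
  have hbdd : IsBoundedUnder (· ≤ ·) atTop fun n => v n / ε ^ n :=
    ⟨1, eventually_map.2 <| h.mono fun n hn => (div_le_one (pow_pos hε n)).2 hn⟩
  obtain ⟨M, hM⟩ := hbdd.bddAbove_range
  exact ⟨M, fun n => (div_le_iff₀ (pow_pos hε n)).1 (hM ⟨n, rfl⟩)⟩

lemma exists_norm_citer_le_mul_pow {a b : A} (h : rho a b = 0) {ε : ℝ} (hε : 0 < ε) :
    ∃ M, ∀ n, ‖citer a b n‖ ≤ M * ε ^ n := by
  refine exists_le_mul_pow_of_eventually_le hε ?_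
  -- Boundedness is needed: the `limsup` of an unbounded real sequence is the junk value `0`.
  have hlt : ∀ᶠ n : ℕ in atTop, ‖citer a b n‖ ^ (n : ℝ)⁻¹ < ε :=
    eventually_lt_of_limsup_lt (h.trans_lt hε) (isBoundedUnder_rpow_inv_norm_citer a b)
  filter_upwards [hlt, eventually_ne_atTop 0] with n hn hn0
  rw [← Real.rpow_inv_natCast_pow (norm_nonneg _) hn0]
  gcongr

end Normed

section Operator

variable {A : Type*} [NormedRing A] [NormedAlgebra ℂ A]

variable (A) in
noncomputable def mulLeftRingHom : A →+* (A →L[ℂ] A) where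
  toFun := mul ℂ A
  map_one' := by ext; simp
  map_mul' x y := by ext; simp [mul_assoc]
  map_zero' := by simp
  map_add' := by simp

variable (A) in
noncomputable def mulRightRingHom : Aᵐᵒᵖ →+* (A →L[ℂ] A) where
  toFun x := (mul ℂ A).flip x.unop
  map_one' := by ext; simp
  map_mul' x y := by ext; simp [mul_assoc]
  map_zero' := by simp
  map_add' := by simp

noncomputable def commutatorCLM (a b : A) : A →L[ℂ] A := mul ℂ A a - (mul ℂ A).flip b

lemma commutatorCLM_pow_apply_one (a b : A) (n : ℕ) : (commutatorCLM a b ^ n) 1 = citer a b n := by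
  induction n with
  | zero => rfl
  | succ n ih => rw [pow_succ', mul_apply_eq_comp, ih, citer_succ]; rfl

variable [CompleteSpace A]

lemma exp_mulLeft (x : A) : exp (mul ℂ A x) = mul ℂ A (exp x) := by
  let _ : NormedAlgebra ℚ A := .restrictScalars ℚ ℂ A
  let _ : NormedAlgebra ℚ (A →L[ℂ] A) := .restrictScalars ℚ ℂ _
  exact (map_exp (mulLeftRingHom A) (mul ℂ A).continuous x).symm

lemma exp_mulRight (x : A) : exp ((mul ℂ A).flip x) = (mul ℂ A).flip (exp x) := by
  let _ : NormedAlgebra ℚ A := .restrictScalars ℚ ℂ A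
  let _ : NormedAlgebra ℚ (A →L[ℂ] A) := .restrictScalars ℚ ℂ _
  have hc : Continuous (mulRightRingHom A) :=
    (mul ℂ A).flip.continuous.comp MulOpposite.continuous_unop
  have h := map_exp (mulRightRingHom A) hc (MulOpposite.op x)
  rw [exp_op] at h
  exact h.symm

lemma exp_commutatorCLM_apply_one (a b : A) :
    exp (commutatorCLM a b) 1 = exp a * exp (-b) := by
  let _ : NormedAlgebra ℚ (A →L[ℂ] A) := .restrictScalars ℚ ℂ _
  have hsplit : commutatorCLM a b = mul ℂ A a + (mul ℂ A).flip (-b) := by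
    simp [commutatorCLM, sub_eq_add_neg]
  have hcomm : Commute (mul ℂ A a) ((mul ℂ A).flip (-b)) := by
    ext x; simp [mul_assoc]
  rw [hsplit, exp_add_of_commute hcomm, mul_apply_eq_comp, exp_mulLeft, exp_mulRight]
  simp

lemma norm_exp_mul_exp_neg_le {a b : A} {M r : ℝ} (hM : ∀ n, ‖citer a b n‖ ≤ M * r ^ n) :
    ‖exp a * exp (-b)‖ ≤ M * Real.exp r := by
  have hexp := (exp_series_hasSum_exp' (𝕂 := ℂ) (commutatorCLM a b)).mapL (apply ℂ A 1)
  have hreal : HasSum (fun n : ℕ => M * (r ^ n / n.factorial)) (M * Real.exp r) :=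
    (Real.exp_eq_exp_ℝ ▸ expSeries_div_hasSum_exp r).mul_left M
  rw [← exp_commutatorCLM_apply_one]
  refine hexp.norm_le_of_bounded hreal fun n => ?_
  rw [apply_apply, smul_apply, commutatorCLM_pow_apply_one, norm_smul, norm_inv,
    Complex.norm_natCast, div_eq_inv_mul, mul_left_comm]
  gcongr
  exact hM n

lemma exists_norm_exp_smul_mul_exp_neg_smul_le {a b : A} (h : rho a b = 0) {ε : ℝ} (hε : 0 < ε) :
    ∃ M, ∀ w : ℂ, ‖exp (w • a) * exp (-(w • b))‖ ≤ M * Real.exp (ε * ‖w‖) := by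
  obtain ⟨M, hM⟩ := exists_norm_citer_le_mul_pow h hε
  refine ⟨M, fun w => norm_exp_mul_exp_neg_le fun n => ?_⟩
  rw [citer_smul, norm_smul, norm_pow]
  calc ‖w‖ ^ n * ‖citer a b n‖ ≤ ‖w‖ ^ n * (M * ε ^ n) := by gcongr; exact hM n
    _ = M * (ε * ‖w‖) ^ n := by ring

end Operator

section PhragmenLindelof

open Complex

variable {E : Type*} [NormedAddCommGroup E] [NormedSpace ℂ E] {g : ℂ → E} {C : ℝ}

lemma norm_le_of_im_nonneg_of_bounded_on_real (hd : Differentiable ℂ g) (hreal : ∀ t : ℝ, ‖g t‖ ≤ C)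
    (hgrowth : ∀ ε > 0, ∃ M, ∀ z, ‖g z‖ ≤ M * Real.exp (ε * |z.im|)) {z : ℂ} (hz : 0 ≤ z.im) :
    ‖g z‖ ≤ C := by
  suffices h : ∀ ε > 0, ‖g z‖ ≤ C * Real.exp (ε * z.im) by
    have hlim : Tendsto (fun ε : ℝ => C * Real.exp (ε * z.im)) (𝓝[>] 0) (𝓝 C) :=
      (Continuous.tendsto' (by fun_prop) 0 C (by simp)).mono_left nhdsWithin_le_nhds
    refine ge_of_tendsto hlim ?_
    filter_upwards [self_mem_nhdsWithin] with ε hε using h ε hε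
  intro ε hε
  obtain ⟨M, hM⟩ := hgrowth ε hε
  -- Rotating by `I` and damping by `exp (-ε w)` makes `g` bounded on the right half-plane.
  set f : ℂ → E := fun w => Complex.exp (-(ε * w)) • g (I * w) with hf
  have hnorm : ∀ w, ‖f w‖ = Real.exp (-(ε * w.re)) * ‖g (I * w)‖ := fun w => by
    simp [hf, norm_smul, Complex.norm_exp]
  have hbound : ∀ w : ℂ, 0 ≤ w.re → ‖f w‖ ≤ M := fun w hw => by
    have := hM (I * w)
    rw [mul_im, I_re, I_im, zero_mul, one_mul, zero_add, abs_of_nonneg hw] at this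
    rw [hnorm]
    calc Real.exp (-(ε * w.re)) * ‖g (I * w)‖
        ≤ Real.exp (-(ε * w.re)) * (M * Real.exp (ε * w.re)) := by gcongr
      _ = M := by rw [mul_left_comm, ← Real.exp_add, neg_add_cancel, Real.exp_zero, mul_one]
  have hfd : Differentiable ℂ f := by simp only [hf]; fun_prop
  have hfC : ‖f (-I * z)‖ ≤ C := by
    refine PhragmenLindelof.right_half_plane_of_bounded_on_real hfd.diffContOnCl ?_ ?_ ?_
      (by simpa)
    · refine ⟨0, two_pos, 0, Asymptotics.IsBigO.of_bound M ?_⟩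
      filter_upwards [mem_inf_of_right (mem_principal_self _)] with w hw
      simpa using hbound w (le_of_lt hw)
    · exact ⟨M, eventually_map.2 <| (eventually_ge_atTop 0).mono fun x hx =>
        hbound x (by simpa using hx)⟩
    · intro x
      have : I * (x * I) = ((-x : ℝ) : ℂ) := by push_cast; ring_nf; simp
      simpa [hnorm, this] using hreal (-x)
  rw [hnorm] at hfC
  simpa [← mul_assoc, mul_comm (Real.exp _), ← le_div_iff₀ (Real.exp_pos _), div_eq_mul_inv,
    ← Real.exp_neg] using hfC

lemma norm_le_of_bounded_on_real (hd : Differentiable ℂ g) (hreal : ∀ t : ℝ, ‖g t‖ ≤ C)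
    (hgrowth : ∀ ε > 0, ∃ M, ∀ z, ‖g z‖ ≤ M * Real.exp (ε * |z.im|)) (z : ℂ) : ‖g z‖ ≤ C := by
  rcases le_total 0 z.im with hz | hz
  · exact norm_le_of_im_nonneg_of_bounded_on_real hd hreal hgrowth hz
  · simpa using norm_le_of_im_nonneg_of_bounded_on_real (g := fun w => g (-w)) (z := -z)
      (hd.comp differentiable_neg) (fun t => by simpa using hreal (-t))
      (fun ε hε => (hgrowth ε hε).imp fun M hM w => by simpa using hM (-w)) (by simpa using hz)

end PhragmenLindelof

lemma add_eq_zero_of_norm_exp_smul_mul_exp_smul_le {A : Type*} [NormedRing A] [NormedAlgebra ℂ A]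
    [CompleteSpace A] {x y : A} {C : ℝ} (hC : ∀ z : ℂ, ‖exp (z • x) * exp (z • y)‖ ≤ C) :
    x + y = 0 := by
  have hderiv (v : A) : HasDerivAt (fun z : ℂ => exp (z • v)) v 0 := by
    simpa using hasDerivAt_exp_smul_const v (0 : ℂ)
  have hd : Differentiable ℂ fun z : ℂ => exp (z • x) * exp (z • y) := by fun_prop
  have hconst : ∀ z : ℂ, exp (z • x) * exp (z • y) = 1 := fun z => by
    have hbdd : Bornology.IsBounded (Set.range fun z : ℂ => exp (z • x) * exp (z • y)) :=
      isBounded_iff_forall_norm_le.2 ⟨C, by rintro _ ⟨z, rfl⟩; exact hC z⟩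
    simpa using hd.apply_eq_apply_of_bounded hbdd z 0
  have h := (hderiv x).mul (hderiv y)
  simp only [zero_smul, NormedSpace.exp_zero, one_mul, mul_one] at h
  simp only [Pi.mul_def, hconst] at h
  exact h.unique (hasDerivAt_const 0 1)

section Normal

variable {A : Type*} [NormedRing A] [StarRing A] [NormedAlgebra ℂ A]

lemma IsStarNormal.commute_smul_star_sub_smul {c : A} (hc : IsStarNormal c) (l m : ℂ) :
    Commute (l • star c - conj l • c) (m • c) :=
  ((hc.star_comm_self.smul_left l).smul_right _).sub_left
    (((Commute.refl c).smul_left _).smul_right _)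

variable [CompleteSpace A]

lemma IsStarNormal.exp_smul_star_add_smul {c : A} (hc : IsStarNormal c) (l m : ℂ) :
    exp (l • star c + m • c) = exp (l • star c - conj l • c) * exp ((conj l + m) • c) := by
  let _ : NormedAlgebra ℚ A := .restrictScalars ℚ ℂ A
  rw [← exp_add_of_commute (hc.commute_smul_star_sub_smul l _)]
  congr 1
  module

variable [StarModule ℂ A] [CStarRing A]

lemma exp_smul_star_sub_mem_unitary (c : A) (l : ℂ) :
    exp (l • star c - conj l • c) ∈ unitary A := by
  let _ : NormedAlgebra ℚ A := .restrictScalars ℚ ℂ A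
  refine exp_mem_unitary_of_mem_skewAdjoint (skewAdjoint.mem_iff.2 ?_)
  simp [star_smul, neg_sub]

lemma norm_exp_mul_exp_of_isStarNormal {a b : A} (ha : IsStarNormal a) (hb : IsStarNormal b)
    (l m l' m' : ℂ) :
    ‖exp (l • star a + m • a) * exp (l' • star b + m' • b)‖ =
      ‖exp ((conj l + m) • a) * exp ((conj l' + m') • b)‖ := by
  rw [ha.exp_smul_star_add_smul, hb.exp_smul_star_add_smul,
    ((hb.commute_smul_star_sub_smul l' _).exp).eq, mul_assoc,
    CStarRing.norm_mem_unitary_mul _ (exp_smul_star_sub_mem_unitary a l), ← mul_assoc,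
    CStarRing.norm_mul_mem_unitary _ (exp_smul_star_sub_mem_unitary b l')]

lemma norm_exp_smul_mul_exp_neg_smul_of_isStarNormal {a b : A} (ha : IsStarNormal a)
    (hb : IsStarNormal b) (u z : ℂ) :
    ‖exp (z • (u • star a - conj u • a)) * exp (-(z • (u • star b - conj u • b)))‖ =
      ‖exp (((conj z - z) * conj u) • a) * exp (-(((conj z - z) * conj u) • b))‖ := by
  have hx : z • (u • star a - conj u • a) = (z * u) • star a + (-(z * conj u)) • a := by module
  have hy : -(z • (u • star b - conj u • b)) = (-(z * u)) • star b + (z * conj u) • b := by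
    module
  rw [hx, hy, norm_exp_mul_exp_of_isStarNormal ha hb, ← neg_smul]
  congr 5 <;> simp only [map_mul, map_neg] <;> ring

lemma smul_star_sub_smul_eq_of_rho_eq_zero {a b : A} (ha : IsStarNormal a) (hb : IsStarNormal b)
    (h : rho a b = 0) {u : ℂ} (hu : ‖u‖ = 1) :
    u • star a - conj u • a = u • star b - conj u • b := by
  have hw (z : ℂ) : ‖(conj z - z) * conj u‖ = 2 * |z.im| := by
    rw [norm_mul, Complex.norm_conj, hu, mul_one, norm_sub_rev, Complex.sub_conj]
    simp
  rw [← sub_eq_zero, sub_eq_add_neg]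
  refine add_eq_zero_of_norm_exp_smul_mul_exp_smul_le (C := ‖(1 : A)‖) fun z => ?_
  refine norm_le_of_bounded_on_real (g := fun z : ℂ => exp (z • _) * exp (z • -_)) (by fun_prop)
    (fun t => ?_) (fun ε hε => ?_) z
  · rw [smul_neg, norm_exp_smul_mul_exp_neg_smul_of_isStarNormal ha hb, Complex.conj_ofReal]
    simp
  · obtain ⟨M, hM⟩ := exists_norm_exp_smul_mul_exp_neg_smul_le h (half_pos hε)
    refine ⟨M, fun z => ?_⟩
    rw [smul_neg, norm_exp_smul_mul_exp_neg_smul_of_isStarNormal ha hb]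
    refine (hM _).trans_eq ?_
    rw [hw]
    ring_nf

end Normal

lemma eq_of_forall_smul_star_sub_smul_eq {A : Type*} [AddCommGroup A] [Module ℂ A] [Star A]
    {a b : A} (h : ∀ u : ℂ, ‖u‖ = 1 → u • star a - conj u • a = u • star b - conj u • b) :
    a = b := by
  have h1 := h 1 (by simp)
  have hI := h Complex.I (by simp)
  simp only [map_one, one_smul, Complex.conj_I] at h1 hI
  have h2 : (2 : ℂ) • (a - b) = 0 := by
    linear_combination (norm := match_scalars) (-Complex.I) • hI - h1 <;> ring_nf <;>
      simp [Complex.I_sq]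
  simpa [sub_eq_zero] using h2

/-- Normal elements of a C*-algebra are equal iff ρ(a,b) = 0. -/
theorem stmt_12 {A : Type*} [NormedRing A] [StarRing A] [CStarRing A] [CompleteSpace A]
    [NormedAlgebra ℂ A] [StarModule ℂ A]
    (a b : A) (ha : IsStarNormal a) (hb : IsStarNormal b) :
    a = b ↔ rho a b = 0 := by
  refine ⟨fun hab => hab ▸ rho_self a, fun h => ?_⟩
  exact eq_of_forall_smul_star_sub_smul_eq fun u hu =>
    smul_star_sub_smul_eq_of_rho_eq_zero ha hb h hu
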